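/- Let X be a random variable with |X| ≤ M almost surely for some M > 0, let N ~ N(0,1) be independent of X, let Y = X + N have density p_Y = e^{−Q}. Set λ := M + 2. Then for every y > M + 4: 1 < (M² + 5M + 8)/(2(M+2)) ≤ Q′(λy)/Q′(y) ≤ (M² + 7M + 8)/4. -/

import Mathlib

/-!
Writing `Q = -log p_Y` and differentiating under the integral sign (the derivative of the
Gaussian kernel, `|t| e^{-t²/2} ≤ 1`, is bounded), `Q'(y)` is the mean of `y - X` under the
probability weights proportional to `e^{-(y-X)²/2}`. Since `|X| ≤ M`, this gives
`y - M ≤ Q'(y) ≤ y + M` for every `y`; both ratio bounds are then elementary algebra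
in `M` and `y`, using `y > M + 4`.
-/

open MeasureTheory ProbabilityTheory Real Filter Set

lemma abs_mul_exp_neg_sq_div_two_le_one (t : ℝ) : |t| * exp (-t ^ 2 / 2) ≤ 1 := by
  have h : |t| ≤ exp (t ^ 2 / 2) := by
    nlinarith [add_one_le_exp (t ^ 2 / 2), sq_abs t, sq_nonneg (|t| - 1)]
  rw [neg_div, exp_neg, ← div_eq_mul_inv, div_le_one (exp_pos _)]
  exact h

lemma div_integral_mem_Icc_of_ae_mem_Icc {Ω : Type*} [MeasurableSpace Ω] {μ : Measure Ω}
    {f w : Ω → ℝ} {a b : ℝ} (hw_nonneg : 0 ≤ᵐ[μ] w) (hw_int : Integrable w μ)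
    (hw_pos : 0 < ∫ ω, w ω ∂μ) (hfw : Integrable (fun ω ↦ f ω * w ω) μ)
    (hf : ∀ᵐ ω ∂μ, f ω ∈ Icc a b) :
    (∫ ω, f ω * w ω ∂μ) / ∫ ω, w ω ∂μ ∈ Icc a b := by
  rw [mem_Icc, le_div_iff₀ hw_pos, div_le_iff₀ hw_pos, ← integral_const_mul,
    ← integral_const_mul]
  constructor
  · refine integral_mono_ae (hw_int.const_mul a) hfw ?_
    filter_upwards [hf, hw_nonneg] with ω hω hwω
    exact mul_le_mul_of_nonneg_right hω.1 hwω
  · refine integral_mono_ae hfw (hw_int.const_mul b) ?_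
    filter_upwards [hf, hw_nonneg] with ω hω hwω
    exact mul_le_mul_of_nonneg_right hω.2 hwω

section GaussianSmoothing

variable {Ω : Type*} [MeasurableSpace Ω] {μ : Measure Ω} [IsFiniteMeasure μ] {X : Ω → ℝ}

lemma integrable_exp_neg_sq_sub (hX : Measurable X) (y : ℝ) :
    Integrable (fun ω ↦ exp (-(y - X ω) ^ 2 / 2)) μ := by
  refine .of_bound (by fun_prop) 1 (Eventually.of_forall fun ω ↦ ?_)
  rw [norm_of_nonneg (exp_pos _).le, exp_le_one_iff]
  nlinarith [sq_nonneg (y - X ω)]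

lemma integrable_sub_mul_exp_neg_sq_sub (hX : Measurable X) (y : ℝ) :
    Integrable (fun ω ↦ (y - X ω) * exp (-(y - X ω) ^ 2 / 2)) μ := by
  refine .of_bound (by fun_prop) 1 (Eventually.of_forall fun ω ↦ ?_)
  rw [norm_mul, norm_of_nonneg (exp_pos _).le, Real.norm_eq_abs]
  exact abs_mul_exp_neg_sq_div_two_le_one _

lemma hasDerivAt_integral_exp_neg_sq_sub (hX : Measurable X) (y : ℝ) :
    HasDerivAt (fun z ↦ ∫ ω, exp (-(z - X ω) ^ 2 / 2) ∂μ)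
      (-∫ ω, (y - X ω) * exp (-(y - X ω) ^ 2 / 2) ∂μ) y := by
  rw [← integral_neg]
  refine (hasDerivAt_integral_of_dominated_loc_of_deriv_le (bound := fun _ ↦ 1)
    (F' := fun z ω ↦ -((z - X ω) * exp (-(z - X ω) ^ 2 / 2))) univ_mem
    (Eventually.of_forall fun z ↦ (integrable_exp_neg_sq_sub hX z).aestronglyMeasurable)
    (integrable_exp_neg_sq_sub hX y)
    (integrable_sub_mul_exp_neg_sq_sub hX y).neg.aestronglyMeasurable
    (Eventually.of_forall fun ω z _ ↦ ?_) (integrable_const 1)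
    (Eventually.of_forall fun ω z _ ↦ ?_)).2
  · rw [norm_neg, norm_mul, norm_of_nonneg (exp_pos _).le, Real.norm_eq_abs]
    exact abs_mul_exp_neg_sq_div_two_le_one _
  · refine ((((hasDerivAt_id' z).sub_const (X ω)).fun_pow 2).fun_neg.div_const 2).exp
      |>.congr_deriv ?_
    norm_num
    ring

lemma hasDerivAt_neg_log_const_mul_integral_exp_neg_sq_sub [NeZero μ] (hX : Measurable X)
    {c : ℝ} (hc : c ≠ 0) (y : ℝ) :
    HasDerivAt (fun z ↦ -log (c * ∫ ω, exp (-(z - X ω) ^ 2 / 2) ∂μ))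
      ((∫ ω, (y - X ω) * exp (-(y - X ω) ^ 2 / 2) ∂μ) /
        ∫ ω, exp (-(y - X ω) ^ 2 / 2) ∂μ) y := by
  have hI := (integral_exp_pos (integrable_exp_neg_sq_sub (μ := μ) hX y)).ne'
  refine (((hasDerivAt_integral_exp_neg_sq_sub hX y).const_mul c).log
    (mul_ne_zero hc hI)).neg.congr_deriv ?_
  rw [mul_neg, neg_div, neg_neg, mul_div_mul_left _ _ hc]

lemma integral_sub_mul_exp_neg_sq_sub_div_mem_Icc [NeZero μ] (hX : Measurable X) {M : ℝ}
    (hXM : ∀ᵐ ω ∂μ, |X ω| ≤ M) (y : ℝ) :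
    (∫ ω, (y - X ω) * exp (-(y - X ω) ^ 2 / 2) ∂μ) /
        ∫ ω, exp (-(y - X ω) ^ 2 / 2) ∂μ ∈ Icc (y - M) (y + M) :=
  div_integral_mem_Icc_of_ae_mem_Icc (Eventually.of_forall fun _ ↦ (exp_pos _).le)
    (integrable_exp_neg_sq_sub hX y) (integral_exp_pos (integrable_exp_neg_sq_sub hX y))
    (integrable_sub_mul_exp_neg_sq_sub hX y)
    (hXM.mono fun ω hω ↦ ⟨by linarith [(abs_le.1 hω).2], by linarith [(abs_le.1 hω).1]⟩)

end GaussianSmoothing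

theorem deriv_ratio_bounds_bounded_input_general
    {Ω : Type*} [MeasurableSpace Ω] (μ : Measure Ω) [IsProbabilityMeasure μ]
    (X : Ω → ℝ) (hXmeas : Measurable X)
    (M : ℝ) (hM : 0 < M) (hXbdd : ∀ᵐ ω ∂μ, |X ω| ≤ M)
    (pY Q : ℝ → ℝ)
    (hpY : ∀ y, pY y = (Real.sqrt (2 * π))⁻¹ * ∫ ω, Real.exp (-(y - X ω) ^ 2 / 2) ∂μ)
    (hQ : ∀ y, Q y = -Real.log (pY y)) :
    ∀ y : ℝ, M + 4 < y →
      1 < (M ^ 2 + 5 * M + 8) / (2 * (M + 2)) ∧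
      (M ^ 2 + 5 * M + 8) / (2 * (M + 2)) ≤ deriv Q ((M + 2) * y) / deriv Q y ∧
      deriv Q ((M + 2) * y) / deriv Q y ≤ (M ^ 2 + 7 * M + 8) / 4 := by
  intro y hy
  have hQ_eq : Q = fun z ↦ -log ((√(2 * π))⁻¹ * ∫ ω, exp (-(z - X ω) ^ 2 / 2) ∂μ) :=
    funext fun z ↦ by rw [hQ, hpY]
  have hc : (√(2 * π))⁻¹ ≠ 0 := by positivity
  have hQ' (z : ℝ) : deriv Q z ∈ Icc (z - M) (z + M) := by
    rw [hQ_eq, (hasDerivAt_neg_log_const_mul_integral_exp_neg_sq_sub hXmeas hc z).deriv]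
    exact integral_sub_mul_exp_neg_sq_sub_div_mem_Icc hXmeas hXbdd z
  obtain ⟨hb_lo, hb_hi⟩ := hQ' y
  obtain ⟨ha_lo, ha_hi⟩ := hQ' ((M + 2) * y)
  have hb_pos : 0 < deriv Q y := by linarith
  have hM2 : 0 < 2 * (M + 2) := by linarith
  refine ⟨?_, ?_, ?_⟩
  · rw [one_lt_div hM2]
    nlinarith
  · rw [div_le_div_iff₀ hM2 hb_pos]
    nlinarith
  · rw [div_le_div_iff₀ hb_pos (by norm_num : (0 : ℝ) < 4)]
    nlinarith [mul_pos (mul_pos hM (by linarith : (0 : ℝ) < M + 3)) (by linarith : 0 < y - M - 4)]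

/-- **Freud-type ratio bound for `Q'` with `λ = M + 2`.**
Let `|X| ≤ M` a.s. with `M > 0`, `N ~ N(0,1)` independent of `X`, and let `Y = X + N`
have density `p_Y = e^{-Q}`, `p_Y(y) = (1/√(2π)) E[exp(-(y-X)²/2)]`. Set `λ = M + 2`.
Then for every `y > M + 4`:
`1 < (M² + 5M + 8)/(2(M+2)) ≤ Q'(λy)/Q'(y) ≤ (M² + 7M + 8)/4`. -/
theorem deriv_ratio_bounds_bounded_input
    {Ω : Type*} [MeasurableSpace Ω] (μ : Measure Ω) [IsProbabilityMeasure μ]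
    (X N : Ω → ℝ) (hXmeas : Measurable X) (hNmeas : Measurable N)
    (M : ℝ) (hM : 0 < M) (hXbdd : ∀ᵐ ω ∂μ, |X ω| ≤ M)
    (hN : Measure.map N μ = gaussianReal 0 1)
    (hindep : IndepFun X N μ)
    (pY Q : ℝ → ℝ)
    (hpY : ∀ y, pY y = (Real.sqrt (2 * π))⁻¹ * ∫ ω, Real.exp (-(y - X ω) ^ 2 / 2) ∂μ)
    (hQ : ∀ y, Q y = -Real.log (pY y)) :
    ∀ y : ℝ, M + 4 < y →
      1 < (M ^ 2 + 5 * M + 8) / (2 * (M + 2)) ∧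
      (M ^ 2 + 5 * M + 8) / (2 * (M + 2)) ≤ deriv Q ((M + 2) * y) / deriv Q y ∧
      deriv Q ((M + 2) * y) / deriv Q y ≤ (M ^ 2 + 7 * M + 8) / 4 :=
  deriv_ratio_bounds_bounded_input_general μ X hXmeas M hM hXbdd pY Q hpY hQ
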